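/- Suppose (a,b) and (ã,b̃) are two solutions on an interval of the system da/dt = (Pa/t)(b - 1/P), db/dt = (P/(2t))(1-b²) - (PQ/2)(1-a²) - Qb with P(t) = √6√(2t²+2)/√(2t²+3), Q(t) = t/(t²+1), and at some time t* > 0 we have a(t*) > ã(t*) > 0 and b(t*) > b̃(t*). Then a(t) > ã(t) and b(t) > b̃(t) for all t ≥ t* for which both solutions exist. -/

import Mathlib

/-- Metric coefficient `P(t) = √6·√(2t²+2)/√(2t²+3)`. -/
noncomputable def Pfun (t : ℝ) : ℝ := Real.sqrt 6 * Real.sqrt (2 * t ^ 2 + 2) / Real.sqrt (2 * t ^ 2 + 3)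

/-- Metric coefficient `Q(t) = t/(t²+1)`. -/
noncomputable def Qfun (t : ℝ) : ℝ := t / (t ^ 2 + 1)

/-- `(a,b)` solves the invariant Spin(7) instanton system on the set `s`. -/
def SolvesSpin7 (a b : ℝ → ℝ) (s : Set ℝ) : Prop :=
  ∀ t ∈ s,
    HasDerivAt a (Pfun t * a t / t * (b t - 1 / Pfun t)) t ∧
    HasDerivAt b
      (Pfun t / (2 * t) * (1 - (b t) ^ 2) - Pfun t * Qfun t / 2 * (1 - (a t) ^ 2) - Qfun t * b t) t

/-!
Put `u = a - a'` and `v = b - b'`. Subtracting the two systems gives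
`(a')' = α a'`, `u' = α u + (P a / t) v` and `v' = (P Q (a + a') / 2) u + δ v`
with `α = (P b' - 1) / t` and `δ = -P (b + b') / (2 t) - Q` continuous. While `a', u, v > 0`
the cross coefficients are nonnegative, so each of `a', u, v` satisfies `g' ≥ m g` with `m`
a lower bound of `α` or `δ` on the compact interval, and Grönwall keeps it positive up to and
including the first time one of them could vanish.
-/

open Set

lemma Pfun_pos (t : ℝ) : 0 < Pfun t := by
  unfold Pfun; positivity

lemma continuous_Pfun : Continuous Pfun := by
  unfold Pfun
  exact Continuous.div (by fun_prop) (by fun_prop) fun t => (Real.sqrt_pos.2 (by positivity)).ne'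

lemma continuous_Qfun : Continuous Qfun := by
  unfold Qfun
  exact Continuous.div (by fun_prop) (by fun_prop) fun t => (by positivity)

lemma Qfun_nonneg {t : ℝ} (ht : 0 ≤ t) : 0 ≤ Qfun t := by
  unfold Qfun; positivity

lemma pos_of_hasDerivAt_of_mul_le {g g' : ℝ → ℝ} {m t₀ t₁ : ℝ} (hle : t₀ ≤ t₁)
    (hg : ∀ t ∈ Icc t₀ t₁, HasDerivAt g (g' t) t)
    (hbound : ∀ t ∈ Ico t₀ t₁, m * g t ≤ g' t) (h₀ : 0 < g t₀) : 0 < g t₁ := by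
  have hgron := le_gronwallBound_of_liminf_deriv_right_le (f := fun t => -g t) (f' := fun t => -g' t)
    (δ := -g t₀) (K := m) (ε := 0)
    (fun t ht => (hg t ht).continuousAt.continuousWithinAt.neg)
    (fun t ht _ hr => (hg t (Ico_subset_Icc_self ht)).hasDerivWithinAt.neg.liminf_right_slope_le hr)
    le_rfl (fun t ht => by linarith [hbound t ht]) t₁ ⟨hle, le_rfl⟩
  rw [gronwallBound_ε0] at hgron
  nlinarith [Real.exp_pos (m * (t₁ - t₀))]

lemma forall_pos_of_forall_Ico_pos {g : ℝ → ℝ} {t₀ t₁ : ℝ} (hg : ContinuousOn g (Icc t₀ t₁))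
    (hstep : ∀ τ ∈ Icc t₀ t₁, (∀ t ∈ Ico t₀ τ, 0 < g t) → 0 < g τ) :
    ∀ t ∈ Icc t₀ t₁, 0 < g t := by
  by_contra! hbad
  set bad := Icc t₀ t₁ ∩ g ⁻¹' Iic 0
  have hclosed : IsClosed bad := hg.preimage_isClosed_of_isClosed isClosed_Icc isClosed_Iic
  have hbdd : BddBelow bad := ⟨t₀, fun t ht => ht.1.1⟩
  obtain ⟨hτ, hgτ⟩ : sInf bad ∈ bad := hclosed.csInf_mem hbad hbdd
  refine (hstep _ hτ fun t ht => ?_).not_ge hgτ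
  by_contra! hgt
  exact ht.2.not_ge (csInf_le hbdd ⟨⟨ht.1, ht.2.le.trans hτ.2⟩, hgt⟩)

noncomputable def spin7FieldA (t x y : ℝ) : ℝ := Pfun t * x / t * (y - 1 / Pfun t)

noncomputable def spin7FieldB (t x y : ℝ) : ℝ :=
  Pfun t / (2 * t) * (1 - y ^ 2) - Pfun t * Qfun t / 2 * (1 - x ^ 2) - Qfun t * y

lemma spin7FieldA_eq_mul (t x y : ℝ) : spin7FieldA t x y = (Pfun t * y - 1) / t * x := by
  unfold spin7FieldA
  field_simp [(Pfun_pos t).ne']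

lemma spin7FieldA_sub_spin7FieldA {t : ℝ} (ht : t ≠ 0) (x y x' y' : ℝ) :
    spin7FieldA t x y - spin7FieldA t x' y'
      = (Pfun t * y' - 1) / t * (x - x') + Pfun t * x / t * (y - y') := by
  simp only [spin7FieldA_eq_mul]
  field_simp
  ring

lemma spin7FieldB_sub_spin7FieldB {t : ℝ} (ht : t ≠ 0) (x y x' y' : ℝ) :
    spin7FieldB t x y - spin7FieldB t x' y'
      = Pfun t * Qfun t / 2 * (x + x') * (x - x')
        + (-(Pfun t / (2 * t) * (y + y')) - Qfun t) * (y - y') := by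
  unfold spin7FieldB
  field_simp
  ring

namespace SolvesSpin7

variable {a b : ℝ → ℝ} {s : Set ℝ}

lemma hasDerivAt_fst (h : SolvesSpin7 a b s) {t : ℝ} (ht : t ∈ s) :
    HasDerivAt a (spin7FieldA t (a t) (b t)) t :=
  (h t ht).1

lemma hasDerivAt_snd (h : SolvesSpin7 a b s) {t : ℝ} (ht : t ∈ s) :
    HasDerivAt b (spin7FieldB t (a t) (b t)) t :=
  (h t ht).2

lemma continuousOn_fst (h : SolvesSpin7 a b s) : ContinuousOn a s :=
  fun _ ht => (h.hasDerivAt_fst ht).continuousAt.continuousWithinAt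

lemma continuousOn_snd (h : SolvesSpin7 a b s) : ContinuousOn b s :=
  fun _ ht => (h.hasDerivAt_snd ht).continuousAt.continuousWithinAt

lemma mono {s' : Set ℝ} (h : SolvesSpin7 a b s) (hs : s' ⊆ s) : SolvesSpin7 a b s' :=
  fun t ht => h t (hs ht)

end SolvesSpin7

theorem SolvesSpin7.comparison_step {a b a' b' : ℝ → ℝ} {t₀ τ : ℝ} (ht₀ : 0 < t₀) (hle : t₀ ≤ τ)
    (hsol : SolvesSpin7 a b (Icc t₀ τ)) (hsol' : SolvesSpin7 a' b' (Icc t₀ τ))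
    (h₀ : 0 < a' t₀ ∧ 0 < a t₀ - a' t₀ ∧ 0 < b t₀ - b' t₀)
    (hbefore : ∀ t ∈ Ico t₀ τ, 0 < a' t ∧ 0 < a t - a' t ∧ 0 < b t - b' t) :
    0 < a' τ ∧ 0 < a τ - a' τ ∧ 0 < b τ - b' τ := by
  have hpos : ∀ t ∈ Icc t₀ τ, 0 < t := fun t ht => ht₀.trans_le ht.1
  obtain ⟨mα, hmα⟩ := isCompact_Icc.bddBelow_image (f := fun t => (Pfun t * b' t - 1) / t)
    (((continuous_Pfun.continuousOn.mul hsol'.continuousOn_snd).sub continuousOn_const).div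
      continuousOn_id fun t ht => (hpos t ht).ne')
  obtain ⟨mδ, hmδ⟩ :=
    isCompact_Icc.bddBelow_image (f := fun t => -(Pfun t / (2 * t) * (b t + b' t)) - Qfun t)
    ((((continuous_Pfun.continuousOn.div (by fun_prop) fun t ht => by have := hpos t ht; positivity).mul
      (hsol.continuousOn_snd.add hsol'.continuousOn_snd)).neg).sub continuous_Qfun.continuousOn)
  have hα : ∀ t ∈ Ico t₀ τ, mα ≤ (Pfun t * b' t - 1) / t :=
    fun t ht => hmα ⟨t, Ico_subset_Icc_self ht, rfl⟩
  have hδ : ∀ t ∈ Ico t₀ τ, mδ ≤ -(Pfun t / (2 * t) * (b t + b' t)) - Qfun t :=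
    fun t ht => hmδ ⟨t, Ico_subset_Icc_self ht, rfl⟩
  refine ⟨?_, ?_, ?_⟩
  · refine pos_of_hasDerivAt_of_mul_le (m := mα) hle (fun t ht => hsol'.hasDerivAt_fst ht)
      (fun t ht => ?_) h₀.1
    rw [spin7FieldA_eq_mul]
    exact mul_le_mul_of_nonneg_right (hα t ht) (hbefore t ht).1.le
  · refine pos_of_hasDerivAt_of_mul_le (g := fun t => a t - a' t) (m := mα) hle
      (fun t ht => (hsol.hasDerivAt_fst ht).sub (hsol'.hasDerivAt_fst ht)) (fun t ht => ?_) h₀.2.1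
    obtain ⟨ha', hu, hv⟩ := hbefore t ht
    have ht_pos : 0 < t := hpos t (Ico_subset_Icc_self ht)
    have hβ : 0 ≤ Pfun t * a t / t := by
      have := Pfun_pos t
      have : 0 < a t := by linarith
      positivity
    rw [spin7FieldA_sub_spin7FieldA ht_pos.ne']
    nlinarith [mul_le_mul_of_nonneg_right (hα t ht) hu.le, mul_nonneg hβ hv.le]
  · refine pos_of_hasDerivAt_of_mul_le (g := fun t => b t - b' t) (m := mδ) hle
      (fun t ht => (hsol.hasDerivAt_snd ht).sub (hsol'.hasDerivAt_snd ht)) (fun t ht => ?_) h₀.2.2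
    obtain ⟨ha', hu, hv⟩ := hbefore t ht
    have ht_pos : 0 < t := hpos t (Ico_subset_Icc_self ht)
    have hγ : 0 ≤ Pfun t * Qfun t / 2 * (a t + a' t) := by
      have := Pfun_pos t
      have := Qfun_nonneg ht_pos.le
      have : 0 < a t := by linarith
      positivity
    rw [spin7FieldB_sub_spin7FieldB ht_pos.ne']
    nlinarith [mul_le_mul_of_nonneg_right (hδ t ht) hv.le, mul_nonneg hγ hu.le]

theorem spin7_comparison_general (a b a' b' : ℝ → ℝ) (tstar T : ℝ)
    (htstar : 0 < tstar)
    (hsol : SolvesSpin7 a b (Set.Icc tstar T))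
    (hsol' : SolvesSpin7 a' b' (Set.Icc tstar T))
    (ha : a' tstar < a tstar) (ha'pos : 0 < a' tstar) (hb : b' tstar < b tstar) :
    ∀ t ∈ Set.Icc tstar T, a' t < a t ∧ b' t < b t := by
  have hgap : ∀ t ∈ Icc tstar T, 0 < min (a' t) (min (a t - a' t) (b t - b' t)) := by
    refine forall_pos_of_forall_Ico_pos ?_ fun τ hτ hbefore => ?_
    · exact hsol'.continuousOn_fst.inf ((hsol.continuousOn_fst.sub hsol'.continuousOn_fst).inf
        (hsol.continuousOn_snd.sub hsol'.continuousOn_snd))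
    · simp only [lt_min_iff] at hbefore ⊢
      exact SolvesSpin7.comparison_step htstar hτ.1 (hsol.mono (Icc_subset_Icc_right hτ.2))
        (hsol'.mono (Icc_subset_Icc_right hτ.2)) ⟨ha'pos, sub_pos.2 ha, sub_pos.2 hb⟩ hbefore
  intro t ht
  have := hgap t ht
  simp only [lt_min_iff, sub_pos] at this
  exact this.2

/-- Comparison principle: if one solution lies strictly above another (componentwise) at some time
`t* > 0`, with the smaller `a`-component positive there, the inequalities persist for all later
times at which both solutions exist. -/
theorem spin7_comparison (a b a' b' : ℝ → ℝ) (tstar T : ℝ)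
    (htstar : 0 < tstar) (hT : tstar ≤ T)
    (hsol : SolvesSpin7 a b (Set.Icc tstar T))
    (hsol' : SolvesSpin7 a' b' (Set.Icc tstar T))
    (ha : a' tstar < a tstar) (ha'pos : 0 < a' tstar) (hb : b' tstar < b tstar) :
    ∀ t ∈ Set.Icc tstar T, a' t < a t ∧ b' t < b t :=
  spin7_comparison_general a b a' b' tstar T htstar hsol hsol' ha ha'pos hb
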